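/- Let E be a fully symmetric sequence space. The following are equivalent: (i) for every x ∈ E and every Dunford-Schwartz operator T, the averages (1/n) Σ_{k=0}^{n−1} T^k(x) converge in supremum norm to some element of E; (ii) E ⊆ c₀; (iii) the constant sequence 𝟏 = (1,1,1,...) does not belong to E. -/

import Mathlib

/-!
If `E ⊄ c₀`, some `x ∈ E` satisfies `|x k| ≥ ε > 0` infinitely often, so every term of its
decreasing rearrangement is `≥ ε`, `𝟏 ≺ ε⁻¹ x` and `𝟏 ∈ E`. The Cesàro averages of `𝟏` under the
right shift tend to `0` pointwise but equal `1` far out, so they have no uniform limit.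

Conversely, let `x ∈ c₀`. A Dunford–Schwartz operator is an `ℓ²`-contraction (Schur's test), so
for finitely supported `x` the von Neumann mean ergodic theorem gives convergence of the averages
in `ℓ²`, hence uniformly. Since all averages are `ℓ∞`-contractions, uniform convergence passes to
the uniform closure `c₀` of the finitely supported sequences. The partial sums `∑_{n<K} x*_n` are
the `K`-functional of the couple `(ℓ₁, ℓ∞)`; every Dunford–Schwartz operator, hence every Cesàro
average, contracts it, and it is upper semicontinuous under uniform limits. So the limit is
majorized by `x` and lies in `E`.
-/

open Filter Finset Topology

/-- The supremum norm of a real sequence. -/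
noncomputable def supNorm (x : ℕ → ℝ) : ℝ := ⨆ n, |x n|

/-- `x` is a bounded sequence (i.e. `x ∈ ℓ∞`). -/
def IsBdd (x : ℕ → ℝ) : Prop := ∃ C, ∀ n, |x n| ≤ C

/-- The non-increasing rearrangement of a bounded sequence, `0`-indexed:
`(x*)_n = inf over finite F with card F ≤ n of sup_{k ∉ F} |x k|`. -/
noncomputable def rearr (x : ℕ → ℝ) (n : ℕ) : ℝ :=
  sInf { r : ℝ | ∃ F : Finset ℕ, F.card ≤ n ∧ r = ⨆ k : {k : ℕ // k ∉ F}, |x k.1| }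

/-- A Dunford–Schwartz operator: a linear operator which is an `ℓ₁`-contraction
and an `ℓ∞`-contraction. -/
def IsDS (T : (ℕ → ℝ) →ₗ[ℝ] (ℕ → ℝ)) : Prop :=
  (∀ x : ℕ → ℝ, Summable (fun n => |x n|) →
      Summable (fun n => |T x n|) ∧ ∑' n, |T x n| ≤ ∑' n, |x n|) ∧
  (∀ x : ℕ → ℝ, IsBdd x → IsBdd (T x) ∧ supNorm (T x) ≤ supNorm x)

/-- The Cesàro average `A(n,T)(x) = (1/n) ∑_{k=0}^{n-1} T^k x`. -/
noncomputable def cesaro (T : (ℕ → ℝ) →ₗ[ℝ] (ℕ → ℝ)) (n : ℕ) (x : ℕ → ℝ) : ℕ → ℝ :=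
  fun s => (∑ k ∈ Finset.range n, (⇑T)^[k] x s) / n

/-- A fully symmetric sequence space: a nonzero linear subspace of `ℓ∞` with a complete
norm `N` such that Hardy–Littlewood–Pólya majorization `x ≺ y`, `y ∈ E`, `x ∈ ℓ∞` imply
`x ∈ E` and `N x ≤ N y`. -/
structure FullySymmSeqSpace where
  carrier : Submodule ℝ (ℕ → ℝ)
  nontrivial : carrier ≠ ⊥
  bdd : ∀ x ∈ carrier, IsBdd x
  N : (ℕ → ℝ) → ℝ
  N_zero : N 0 = 0
  N_pos : ∀ x ∈ carrier, x ≠ 0 → 0 < N x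
  N_add : ∀ x ∈ carrier, ∀ y ∈ carrier, N (x + y) ≤ N x + N y
  N_smul : ∀ (c : ℝ), ∀ x ∈ carrier, N (c • x) = |c| * N x
  complete : ∀ f : ℕ → (ℕ → ℝ), (∀ k, f k ∈ carrier) →
    (∀ ε > 0, ∃ K, ∀ m ≥ K, ∀ n ≥ K, N (f m - f n) < ε) →
    ∃ x ∈ carrier, Filter.Tendsto (fun k => N (f k - x)) Filter.atTop (nhds 0)
  fullySymm : ∀ y ∈ carrier, ∀ x : ℕ → ℝ, IsBdd x →
    (∀ k, ∑ n ∈ Finset.range (k + 1), rearr x n ≤ ∑ n ∈ Finset.range (k + 1), rearr y n) →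
    x ∈ carrier ∧ N x ≤ N y

section BoundedSequences

variable {x y : ℕ → ℝ}

lemma IsBdd.bddAbove_abs_comp (hx : IsBdd x) {ι : Type*} (f : ι → ℕ) :
    BddAbove (Set.range fun i => |x (f i)|) := by
  obtain ⟨C, hC⟩ := hx
  exact ⟨C, by rintro _ ⟨i, rfl⟩; exact hC (f i)⟩

lemma IsBdd.abs_le_supNorm (hx : IsBdd x) (n : ℕ) : |x n| ≤ supNorm x :=
  le_ciSup (hx.bddAbove_abs_comp id) n

lemma supNorm_nonneg (x : ℕ → ℝ) : 0 ≤ supNorm x :=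
  Real.iSup_nonneg fun _ => abs_nonneg _

lemma supNorm_le {C : ℝ} (h : ∀ n, |x n| ≤ C) : supNorm x ≤ C := ciSup_le h

lemma supNorm_const_one : supNorm (fun _ => (1 : ℝ)) = 1 := by
  simp [supNorm]

lemma isBdd_of_abs_sub_le {ε : ℝ} (hy : IsBdd y) (h : ∀ n, |x n - y n| ≤ ε) : IsBdd x := by
  obtain ⟨C, hC⟩ := hy
  refine ⟨C + ε, fun n => ?_⟩
  calc |x n| = |(x n - y n) + y n| := by ring_nf
    _ ≤ |x n - y n| + |y n| := abs_add_le _ _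
    _ ≤ C + ε := by linarith [h n, hC n]

lemma IsBdd.sub (hx : IsBdd x) (hy : IsBdd y) : IsBdd (fun n => x n - y n) := by
  obtain ⟨C, hC⟩ := hx
  obtain ⟨D, hD⟩ := hy
  exact ⟨C + D, fun n => (abs_sub _ _).trans (add_le_add (hC n) (hD n))⟩

end BoundedSequences

section Rearrangement

variable {x y : ℕ → ℝ}

instance (F : Finset ℕ) : Nonempty {k : ℕ // k ∉ F} :=
  let ⟨k, hk⟩ := F.exists_notMem; ⟨⟨k, hk⟩⟩

lemma rearr_nonneg (x : ℕ → ℝ) (n : ℕ) : 0 ≤ rearr x n :=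
  le_csInf ⟨_, ∅, by simp, rfl⟩ fun _ ⟨_, _, hr⟩ => hr ▸ Real.iSup_nonneg fun _ => abs_nonneg _

lemma rearr_le_iSup {F : Finset ℕ} {n : ℕ} (hF : F.card ≤ n) :
    rearr x n ≤ ⨆ k : {k : ℕ // k ∉ F}, |x k.1| :=
  csInf_le ⟨0, fun _ ⟨_, _, hr⟩ => hr ▸ Real.iSup_nonneg fun _ => abs_nonneg _⟩ ⟨F, hF, rfl⟩

lemma le_rearr (hx : IsBdd x) {n : ℕ} {c : ℝ}
    (h : ∀ F : Finset ℕ, F.card ≤ n → ∃ k ∉ F, c ≤ |x k|) : c ≤ rearr x n := by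
  refine le_csInf ⟨_, ∅, by simp, rfl⟩ ?_
  rintro _ ⟨F, hF, rfl⟩
  obtain ⟨k, hk, hck⟩ := h F hF
  exact hck.trans (le_ciSup (hx.bddAbove_abs_comp Subtype.val) ⟨k, hk⟩)

lemma rearr_antitone (x : ℕ → ℝ) : Antitone (rearr x) := fun _ _ hmn =>
  csInf_le_csInf ⟨0, fun _ ⟨_, _, hr⟩ => hr ▸ Real.iSup_nonneg fun _ => abs_nonneg _⟩
    ⟨_, ∅, by simp, rfl⟩ fun _ ⟨F, hF, hr⟩ => ⟨F, hF.trans hmn, hr⟩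

lemma rearr_le_add (hy : IsBdd y) {c : ℝ} (h : ∀ k, |x k| ≤ |y k| + c) (n : ℕ) :
    rearr x n ≤ rearr y n + c := by
  rw [← sub_le_iff_le_add]
  refine le_csInf ⟨_, ∅, by simp, rfl⟩ ?_
  rintro _ ⟨F, hF, rfl⟩
  rw [sub_le_iff_le_add]
  exact (rearr_le_iSup hF).trans <| ciSup_le fun k =>
    (h k).trans (add_le_add_left (le_ciSup (hy.bddAbove_abs_comp Subtype.val) k) c)

lemma rearr_le_supNorm (hx : IsBdd x) (n : ℕ) : rearr x n ≤ supNorm x :=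
  (rearr_le_iSup (F := ∅) (by simp)).trans (ciSup_le fun k => hx.abs_le_supNorm k.1)

lemma le_rearr_of_frequently (hx : IsBdd x) {c : ℝ} (h : ∃ᶠ k in atTop, c ≤ |x k|) (n : ℕ) :
    c ≤ rearr x n := by
  refine le_rearr hx fun F _ => ?_
  have hF : ∀ᶠ k in atTop, k ∉ F :=
    Nat.cofinite_eq_atTop ▸ F.finite_toSet.eventually_cofinite_notMem
  obtain ⟨k, hck, hk⟩ := (h.and_eventually hF).exists
  exact ⟨k, hk, hck⟩

lemma exists_abs_le_rearr (hx : IsBdd x) {G : Finset ℕ} {n : ℕ} (hG : n < G.card) :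
    ∃ k ∈ G, |x k| ≤ rearr x n := by
  obtain ⟨k, hkG, hmin⟩ := G.exists_min_image (fun k => |x k|) (Finset.card_pos.mp (by omega))
  refine ⟨k, hkG, le_rearr hx fun F hF => ?_⟩
  obtain ⟨j, hjG, hjF⟩ := Finset.not_subset.mp fun hGF : G ⊆ F =>
    absurd (Finset.card_le_card hGF) (by omega)
  exact ⟨j, hjF, hmin j hjG⟩

end Rearrangement

section KFunctional

variable {x u v : ℕ → ℝ}

noncomputable def rearrSum (K : ℕ) (x : ℕ → ℝ) : ℝ := ∑ n ∈ range K, rearr x n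

lemma sum_abs_le_rearrSum (hx : IsBdd x) (G : Finset ℕ) :
    ∑ k ∈ G, |x k| ≤ rearrSum G.card x := by
  induction hn : G.card generalizing G with
  | zero => simp [Finset.card_eq_zero.mp hn, rearrSum]
  | succ n ih =>
    obtain ⟨k, hkG, hk⟩ := exists_abs_le_rearr hx (G := G) (n := n) (by omega)
    rw [← Finset.sum_erase_add _ _ hkG, rearrSum, Finset.sum_range_succ]
    exact add_le_add (ih _ (by rw [Finset.card_erase_of_mem hkG, hn]; rfl)) hk

lemma card_le_of_forall_rearr_lt (hx : IsBdd x) {K : ℕ} {G : Finset ℕ}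
    (hG : ∀ k ∈ G, rearr x K < |x k|) : G.card ≤ K := by
  by_contra! hK
  obtain ⟨k, hkG, hk⟩ := exists_abs_le_rearr hx hK
  exact (hG k hkG).not_ge hk

lemma finite_setOf_rearr_lt (hx : IsBdd x) (K : ℕ) : {k | rearr x K < |x k|}.Finite := by
  by_contra hinf
  obtain ⟨G, hGsub, hG⟩ := Set.Infinite.exists_subset_card_eq hinf (K + 1)
  have := card_le_of_forall_rearr_lt hx fun k hk => hGsub hk
  omega

lemma abs_sub_clamp {t : ℝ} (ht : 0 ≤ t) (a : ℝ) :
    |a - max (-t) (min t a)| = max (|a| - t) 0 := by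
  grind [abs_of_nonneg, abs_of_nonpos]

/-- The decomposition `x = u + v` cutting `x` at height `rearr x K` is optimal for the
`K`-functional of the couple `(ℓ₁, ℓ∞)`. -/
lemma exists_decomposition_le_rearrSum (hx : IsBdd x) (K : ℕ) :
    ∃ u v : ℕ → ℝ, x = u + v ∧ Summable (fun n => |u n|) ∧ IsBdd v ∧
      ∑' n, |u n| + K * supNorm v ≤ rearrSum K x := by
  set t := rearr x K
  have ht : 0 ≤ t := rearr_nonneg x K
  set v : ℕ → ℝ := fun k => max (-t) (min t (x k))
  have hv : ∀ k, |v k| ≤ t := fun k =>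
    abs_le.mpr ⟨le_max_left _ _, max_le (by linarith) (min_le_left _ _)⟩
  set S := (finite_setOf_rearr_lt hx K).toFinset
  have hu : ∀ k, |x k - v k| = if k ∈ S then |x k| - t else 0 := fun k => by
    rw [abs_sub_clamp ht]
    split_ifs with h <;> simp only [S, Set.Finite.mem_toFinset, Set.mem_ofPred_eq] at h
    · exact max_eq_left (by linarith)
    · exact max_eq_right (by linarith)
  have hu_tsum : ∑' k, |x k - v k| = ∑ k ∈ S, |x k| - S.card * t := by
    rw [tsum_eq_sum (s := S) fun k hk => by rw [hu, if_neg hk], Finset.sum_congr rfl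
      fun k hk => by rw [hu, if_pos hk], Finset.sum_sub_distrib, Finset.sum_const, nsmul_eq_mul]
  have hSK : S.card ≤ K := card_le_of_forall_rearr_lt hx fun k hk => by simpa [S] using hk
  have htail : ((K - S.card : ℕ) : ℝ) * t ≤ ∑ n ∈ Ico S.card K, rearr x n := by
    simpa using Finset.card_nsmul_le_sum (Ico S.card K) (rearr x) t
      fun n hn => rearr_antitone x (Finset.mem_Ico.mp hn).2.le
  refine ⟨x - v, v, (sub_add_cancel x v).symm,
    summable_of_ne_finset_zero (s := S) fun k hk => by simp only [Pi.sub_apply, hu, if_neg hk],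
    ⟨t, hv⟩, ?_⟩
  have hsplit := Finset.sum_range_add_sum_Ico (rearr x) hSK
  have hS := sum_abs_le_rearrSum hx S
  have hsup : K * supNorm v ≤ K * t := mul_le_mul_of_nonneg_left (supNorm_le hv) (Nat.cast_nonneg K)
  push_cast [hSK] at htail
  simp only [Pi.sub_apply, hu_tsum, rearrSum] at hS ⊢
  linarith

lemma rearrSum_le_tsum_abs (hu : Summable fun n => |u n|) (K : ℕ) :
    rearrSum K u ≤ ∑' n, |u n| := by
  refine le_of_forall_pos_le_add fun ε hε => ?_
  set δ := ε / (K + 1)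
  have hδ : 0 < δ := by positivity
  -- pick greedily, one index at a time, an entry within `δ` of the current supremum
  have greedy : ∀ m : ℕ, ∃ G : Finset ℕ, G.card = m ∧ rearrSum m u ≤ ∑ k ∈ G, |u k| + m * δ := by
    intro m
    induction m with
    | zero => exact ⟨∅, rfl, by simp [rearrSum]⟩
    | succ m ih =>
      obtain ⟨G, hGm, hG⟩ := ih
      obtain ⟨⟨k, hkG⟩, hk⟩ :=
        exists_lt_of_lt_ciSup (sub_lt_self (⨆ k : {k : ℕ // k ∉ G}, |u k.1|) hδ)
      have hrearr := rearr_le_iSup (x := u) hGm.le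
      refine ⟨insert k G, by rw [Finset.card_insert_of_notMem hkG, hGm], ?_⟩
      rw [rearrSum, Finset.sum_range_succ, Finset.sum_insert hkG]
      rw [rearrSum] at hG
      push_cast
      linarith
  obtain ⟨G, hGK, hG⟩ := greedy K
  have hKδ : K * δ ≤ ε := by
    rw [mul_div_assoc', div_le_iff₀ (by positivity)]
    linarith
  linarith [hu.sum_le_tsum G fun _ _ => abs_nonneg _]

lemma rearrSum_add_le (hu : Summable fun n => |u n|) (hv : IsBdd v) (K : ℕ) :
    rearrSum K (u + v) ≤ ∑' n, |u n| + K * supNorm v := by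
  have hub : IsBdd u := ⟨∑' n, |u n|, fun k => hu.le_tsum k fun _ _ => abs_nonneg _⟩
  have hr (n : ℕ) : rearr (u + v) n ≤ rearr u n + supNorm v :=
    rearr_le_add hub (fun k => (abs_add_le _ _).trans (add_le_add_right (hv.abs_le_supNorm k) _)) n
  calc rearrSum K (u + v) ≤ ∑ n ∈ range K, (rearr u n + supNorm v) :=
        Finset.sum_le_sum fun n _ => hr n
    _ = rearrSum K u + K * supNorm v := by
      rw [Finset.sum_add_distrib, Finset.sum_const, Finset.card_range, nsmul_eq_mul]; rfl
    _ ≤ ∑' n, |u n| + K * supNorm v := add_le_add_left (rearrSum_le_tsum_abs hu K) _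

end KFunctional

section DunfordSchwartz

variable {S R T : (ℕ → ℝ) →ₗ[ℝ] (ℕ → ℝ)} {x y : ℕ → ℝ}

lemma isDS_one : IsDS 1 :=
  ⟨fun _ hx => ⟨hx, le_rfl⟩, fun _ hx => ⟨hx, le_rfl⟩⟩

lemma IsDS.mul (hS : IsDS S) (hR : IsDS R) : IsDS (S * R) := by
  refine ⟨fun x hx => ?_, fun x hx => ?_⟩
  · obtain ⟨hRx, hRx_le⟩ := hR.1 x hx
    obtain ⟨hSRx, hSRx_le⟩ := hS.1 _ hRx
    exact ⟨hSRx, hSRx_le.trans hRx_le⟩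
  · obtain ⟨hRx, hRx_le⟩ := hR.2 x hx
    obtain ⟨hSRx, hSRx_le⟩ := hS.2 _ hRx
    exact ⟨hSRx, hSRx_le.trans hRx_le⟩

lemma IsDS.pow (hT : IsDS T) (k : ℕ) : IsDS (T ^ k) := by
  induction k with
  | zero => exact isDS_one
  | succ k ih => rw [pow_succ]; exact ih.mul hT

lemma isDS_sum_smul {ι : Type*} {s : Finset ι} {w : ι → ℝ} {S : ι → (ℕ → ℝ) →ₗ[ℝ] (ℕ → ℝ)}
    (hw : ∀ i ∈ s, 0 ≤ w i) (hw1 : ∑ i ∈ s, w i ≤ 1) (hS : ∀ i ∈ s, IsDS (S i)) :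
    IsDS (∑ i ∈ s, w i • S i) := by
  have habs (x : ℕ → ℝ) (n : ℕ) : |(∑ i ∈ s, w i • S i) x n| ≤ ∑ i ∈ s, w i * |S i x n| := by
    rw [LinearMap.sum_apply, Finset.sum_apply]
    refine (abs_sum_le_sum_abs _ _).trans (Finset.sum_le_sum fun i hi => ?_)
    rw [LinearMap.smul_apply, Pi.smul_apply, smul_eq_mul, abs_mul, abs_of_nonneg (hw i hi)]
  have hconvex {a : ι → ℝ} {b : ℝ} (hb : 0 ≤ b) (hab : ∀ i ∈ s, a i ≤ b) :
      ∑ i ∈ s, w i * a i ≤ b :=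
    calc ∑ i ∈ s, w i * a i ≤ ∑ i ∈ s, w i * b :=
          Finset.sum_le_sum fun i hi => mul_le_mul_of_nonneg_left (hab i hi) (hw i hi)
      _ = (∑ i ∈ s, w i) * b := (Finset.sum_mul _ _ _).symm
      _ ≤ b := mul_le_of_le_one_left hb hw1
  refine ⟨fun x hx => ?_, fun x hx => ?_⟩
  · have hsum (i) (hi : i ∈ s) := (hS i hi).1 x hx
    have hmaj : Summable fun n => ∑ i ∈ s, w i * |S i x n| :=
      summable_sum fun i hi => (hsum i hi).1.mul_left (w i)
    refine ⟨hmaj.of_nonneg_of_le (fun _ => abs_nonneg _) (habs x), ?_⟩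
    calc ∑' n, |(∑ i ∈ s, w i • S i) x n| ≤ ∑' n, ∑ i ∈ s, w i * |S i x n| :=
          (hmaj.of_nonneg_of_le (fun _ => abs_nonneg _) (habs x)).tsum_le_tsum (habs x) hmaj
      _ = ∑ i ∈ s, w i * ∑' n, |S i x n| := by
          rw [Summable.tsum_finsetSum fun i hi => (hsum i hi).1.mul_left (w i)]
          exact Finset.sum_congr rfl fun i _ => tsum_mul_left
      _ ≤ ∑' n, |x n| := hconvex (tsum_nonneg fun _ => abs_nonneg _) fun i hi => (hsum i hi).2
  · have hbound (n : ℕ) : |(∑ i ∈ s, w i • S i) x n| ≤ supNorm x :=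
      (habs x n).trans <| hconvex (supNorm_nonneg x) fun i hi =>
        (((hS i hi).2 x hx).1.abs_le_supNorm n).trans ((hS i hi).2 x hx).2
    exact ⟨⟨_, hbound⟩, supNorm_le hbound⟩

noncomputable def cesaroMap (T : (ℕ → ℝ) →ₗ[ℝ] (ℕ → ℝ)) (n : ℕ) : (ℕ → ℝ) →ₗ[ℝ] (ℕ → ℝ) :=
  ∑ k ∈ range n, (n : ℝ)⁻¹ • T ^ k

lemma cesaroMap_apply (T : (ℕ → ℝ) →ₗ[ℝ] (ℕ → ℝ)) (n : ℕ) (x : ℕ → ℝ) :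
    cesaroMap T n x = cesaro T n x := by
  ext s
  simp [cesaroMap, cesaro, Finset.sum_apply, Module.End.pow_apply, ← Finset.mul_sum, div_eq_inv_mul]

lemma IsDS.cesaroMap (hT : IsDS T) (n : ℕ) : IsDS (cesaroMap T n) := by
  refine isDS_sum_smul (fun _ _ => by positivity) ?_ fun k _ => hT.pow k
  rw [Finset.sum_const, Finset.card_range, nsmul_eq_mul]
  exact mul_inv_le_one

lemma IsDS.rearrSum_map_le (hT : IsDS T) (hy : IsBdd y) (K : ℕ) :
    rearrSum K (T y) ≤ rearrSum K y := by
  obtain ⟨u, v, rfl, hu, hv, hle⟩ := exists_decomposition_le_rearrSum hy K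
  obtain ⟨hTu, hTu_le⟩ := hT.1 u hu
  obtain ⟨hTv, hTv_le⟩ := hT.2 v hv
  calc rearrSum K (T (u + v)) = rearrSum K (T u + T v) := by rw [map_add]
    _ ≤ ∑' n, |T u n| + K * supNorm (T v) := rearrSum_add_le hTu hTv K
    _ ≤ ∑' n, |u n| + K * supNorm v := by gcongr
    _ ≤ rearrSum K (u + v) := hle

lemma IsDS.isBdd_cesaro (hT : IsDS T) (hx : IsBdd x) (n : ℕ) : IsBdd (cesaro T n x) :=
  cesaroMap_apply T n x ▸ ((hT.cesaroMap n).2 x hx).1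

lemma IsDS.rearrSum_cesaro_le (hT : IsDS T) (hx : IsBdd x) (n K : ℕ) :
    rearrSum K (cesaro T n x) ≤ rearrSum K x :=
  cesaroMap_apply T n x ▸ (hT.cesaroMap n).rearrSum_map_le hx K

lemma IsDS.abs_apply_sub_le (hT : IsDS T) {ε : ℝ} (h : ∀ s, |x s - y s| ≤ ε) (n : ℕ) :
    |T x n - T y n| ≤ ε := by
  obtain ⟨hbdd, hle⟩ := hT.2 (x - y) ⟨ε, h⟩
  rw [← Pi.sub_apply, ← map_sub]
  exact (hbdd.abs_le_supNorm n).trans (hle.trans (supNorm_le h))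

end DunfordSchwartz

section UniformConvergence

variable {F : ℕ → ℕ → ℝ} {g x : ℕ → ℝ}

lemma TendstoUniformly.tendsto_supNorm_sub (h : TendstoUniformly F g atTop) :
    Tendsto (fun n => supNorm fun s => F n s - g s) atTop (𝓝 0) := by
  refine tendsto_order.2 ⟨fun a ha => Eventually.of_forall fun n => ha.trans_le (supNorm_nonneg _),
    fun a ha => ?_⟩
  filter_upwards [Metric.tendstoUniformly_iff.1 h (a / 2) (by positivity)] with n hn
  refine (supNorm_le fun s => ?_).trans_lt (half_lt_self ha)
  rw [abs_sub_comm, ← Real.dist_eq]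
  exact (hn s).le

lemma tendstoUniformly_of_tendsto_supNorm_sub (hF : ∀ n, IsBdd (F n)) (hg : IsBdd g)
    (h : Tendsto (fun n => supNorm fun s => F n s - g s) atTop (𝓝 0)) :
    TendstoUniformly F g atTop := by
  refine Metric.tendstoUniformly_iff.2 fun ε hε => ?_
  filter_upwards [h.eventually (gt_mem_nhds hε)] with n hn s
  rw [Real.dist_eq, abs_sub_comm]
  exact (((hF n).sub hg).abs_le_supNorm s).trans_lt hn

lemma TendstoUniformly.isBdd (hF : ∀ n, IsBdd (F n)) (h : TendstoUniformly F g atTop) :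
    IsBdd g := by
  obtain ⟨n, hn⟩ := (Metric.tendstoUniformly_iff.1 h 1 one_pos).exists
  exact isBdd_of_abs_sub_le (hF n) fun s => (Real.dist_eq _ _ ▸ hn s).le

lemma rearrSum_le_of_tendstoUniformly (hF : ∀ n, IsBdd (F n)) (h : TendstoUniformly F g atTop)
    {K : ℕ} {C : ℝ} (hC : ∀ n, rearrSum K (F n) ≤ C) : rearrSum K g ≤ C := by
  refine le_of_forall_pos_le_add fun ε hε => ?_
  set δ := ε / (K + 1)
  obtain ⟨n, hn⟩ := (Metric.tendstoUniformly_iff.1 h δ (by positivity)).exists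
  have hr (j : ℕ) : rearr g j ≤ rearr (F n) j + δ := by
    refine rearr_le_add (hF n) (fun s => ?_) j
    have := abs_sub_abs_le_abs_sub (g s) (F n s)
    linarith [Real.dist_eq (g s) (F n s) ▸ hn s]
  have hKδ : K * δ ≤ ε := by
    rw [mul_div_assoc', div_le_iff₀ (by positivity)]
    linarith
  calc rearrSum K g ≤ ∑ j ∈ range K, (rearr (F n) j + δ) := Finset.sum_le_sum fun j _ => hr j
    _ = rearrSum K (F n) + K * δ := by
      rw [Finset.sum_add_distrib, Finset.sum_const, Finset.card_range, nsmul_eq_mul]; rfl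
    _ ≤ C + ε := add_le_add (hC n) hKδ

lemma tendstoUniformly_indicator_Iio (hx : Tendsto x atTop (𝓝 0)) :
    TendstoUniformly (fun M => (Set.Iio M).indicator x) x atTop := by
  refine Metric.tendstoUniformly_iff.2 fun ε hε => ?_
  obtain ⟨N, hN⟩ := Metric.tendsto_atTop.1 hx ε hε
  filter_upwards [eventually_ge_atTop N] with M hM s
  by_cases hs : s < M
  · simpa [Set.indicator_of_mem (Set.mem_Iio.2 hs)] using hε
  · simpa [Set.indicator_of_notMem (fun h : s ∈ Set.Iio M => hs h)] using hN s (by omega)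

lemma UniformCauchySeqOn.exists_tendstoUniformly {α β : Type*} [UniformSpace β] [CompleteSpace β]
    {G : ℕ → α → β} (h : UniformCauchySeqOn G atTop Set.univ) :
    ∃ g, TendstoUniformly G g atTop := by
  choose g hg using fun a => cauchySeq_tendsto_of_complete (h.cauchySeq (Set.mem_univ a))
  exact ⟨g, tendstoUniformlyOn_univ.1 (h.tendstoUniformlyOn_of_tendsto fun a _ => hg a)⟩

/-- All Cesàro averages are `ℓ∞`-contractions, so the `ε/3` argument goes through. -/
lemma IsDS.exists_tendstoUniformly_cesaro_of_approx {T : (ℕ → ℝ) →ₗ[ℝ] (ℕ → ℝ)} (hT : IsDS T)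
    {Y : ℕ → ℕ → ℝ} (hY : TendstoUniformly Y x atTop)
    (hYT : ∀ M, ∃ L, TendstoUniformly (fun n => cesaro T n (Y M)) L atTop) :
    ∃ L, TendstoUniformly (fun n => cesaro T n x) L atTop := by
  refine UniformCauchySeqOn.exists_tendstoUniformly (Metric.uniformCauchySeqOn_iff.2 fun ε hε => ?_)
  obtain ⟨M, hM⟩ := (Metric.tendstoUniformly_iff.1 hY (ε / 3) (by positivity)).exists
  obtain ⟨L, hL⟩ := hYT M
  obtain ⟨N, hN⟩ := Metric.uniformCauchySeqOn_iff.1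
    (tendstoUniformlyOn_univ.2 hL).uniformCauchySeqOn (ε / 3) (by positivity)
  have happrox (n s : ℕ) : dist (cesaro T n x s) (cesaro T n (Y M) s) ≤ ε / 3 := by
    simpa only [cesaroMap_apply, Real.dist_eq] using (hT.cesaroMap n).abs_apply_sub_le
      (fun s => (Real.dist_eq _ _ ▸ hM s).le) s
  refine ⟨N, fun m hm n hn s _ => ?_⟩
  calc dist (cesaro T m x s) (cesaro T n x s)
      ≤ dist (cesaro T m x s) (cesaro T m (Y M) s) + dist (cesaro T m (Y M) s) (cesaro T n (Y M) s)
        + dist (cesaro T n (Y M) s) (cesaro T n x s) := dist_triangle4 _ _ _ _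
    _ < ε := by
      rw [dist_comm (cesaro T n (Y M) s)]
      linarith [happrox m s, happrox n s, hN m hm n hn s (Set.mem_univ s)]

end UniformConvergence

section L2

variable {T : (ℕ → ℝ) →ₗ[ℝ] (ℕ → ℝ)} {f : ℕ → ℝ}

lemma IsDS.tendstoUniformly_map (hT : IsDS T) {ι : Type*} {l : Filter ι} {Y : ι → ℕ → ℝ}
    (h : TendstoUniformly Y f l) : TendstoUniformly (fun i => T (Y i)) (T f) l := by
  refine Metric.tendstoUniformly_iff.2 fun ε hε => ?_
  filter_upwards [Metric.tendstoUniformly_iff.1 h (ε / 2) (by positivity)] with i hi n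
  rw [Real.dist_eq]
  exact (hT.abs_apply_sub_le (fun s => (Real.dist_eq _ _ ▸ hi s).le) n).trans_lt (half_lt_self hε)

lemma apply_eq_sum_mul_apply_single (T : (ℕ → ℝ) →ₗ[ℝ] (ℕ → ℝ)) {F : Finset ℕ}
    (hf : ∀ k ∉ F, f k = 0) (n : ℕ) : T f n = ∑ k ∈ F, f k * T (Pi.single k 1) n := by
  have hsum : f = ∑ k ∈ F, f k • Pi.single k (1 : ℝ) := by
    ext j
    by_cases hj : j ∈ F <;> simp [Finset.sum_apply, Pi.single_apply, hj, hf]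
  conv_lhs => rw [hsum]
  simp [Finset.sum_apply]

lemma IsDS.sum_abs_row_le_one (hT : IsDS T) (F : Finset ℕ) (n : ℕ) :
    ∑ k ∈ F, |T (Pi.single k 1) n| ≤ 1 := by
  -- test `T` on the signs of the `n`-th row
  set g : ℕ → ℝ := fun k => if k ∈ F then SignType.sign (T (Pi.single k 1) n) else 0
  have hg (k : ℕ) : |g k| ≤ 1 := by
    by_cases hk : k ∈ F
    · simp only [g, if_pos hk]
      rcases lt_trichotomy (T (Pi.single k 1) n) 0 with h | h | h <;> simp [h]
    · simp [g, hk]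
  obtain ⟨hTg, hTg_le⟩ := hT.2 g ⟨1, hg⟩
  have hrow : T g n = ∑ k ∈ F, |T (Pi.single k 1) n| := by
    rw [apply_eq_sum_mul_apply_single T (fun k hk => if_neg hk) n]
    exact Finset.sum_congr rfl fun k hk => by simp [hk]
  calc ∑ k ∈ F, |T (Pi.single k 1) n| ≤ |T g n| := hrow ▸ le_abs_self _
    _ ≤ 1 := (hTg.abs_le_supNorm n).trans (hTg_le.trans (supNorm_le hg))

lemma IsDS.sum_abs_column_le_one (hT : IsDS T) (k : ℕ) (W : Finset ℕ) :
    ∑ n ∈ W, |T (Pi.single k 1) n| ≤ 1 := by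
  have hsingle : Summable fun n => |(Pi.single k 1 : ℕ → ℝ) n| :=
    summable_of_ne_finset_zero (s := {k}) fun n hn => by simp_all
  obtain ⟨hsum, hle⟩ := hT.1 _ hsingle
  calc ∑ n ∈ W, |T (Pi.single k 1) n| ≤ ∑' n, |T (Pi.single k 1) n| :=
        hsum.sum_le_tsum W fun _ _ => abs_nonneg _
    _ ≤ 1 := hle.trans_eq (by rw [tsum_eq_single k fun n hn => by simp [hn]]; simp)

/-- Schur's test: bounded row and column sums make `T` an `ℓ²`-contraction. -/
lemma IsDS.sum_sq_apply_le_of_support (hT : IsDS T) {F : Finset ℕ} (hf : ∀ k ∉ F, f k = 0)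
    (W : Finset ℕ) : ∑ n ∈ W, T f n ^ 2 ≤ ∑ k ∈ F, f k ^ 2 := by
  set a : ℕ → ℕ → ℝ := fun n k => |T (Pi.single k 1) n|
  have hrow (n : ℕ) : T f n ^ 2 ≤ ∑ k ∈ F, a n k * f k ^ 2 := by
    have hcs : (∑ k ∈ F, |f k| * a n k) ^ 2 ≤ (∑ k ∈ F, a n k) * ∑ k ∈ F, a n k * f k ^ 2 :=
      Finset.sum_sq_le_sum_mul_sum_of_sq_le_mul F (fun _ _ => abs_nonneg _)
        (fun _ _ => by positivity) fun k _ => by rw [mul_pow, sq_abs]; exact le_of_eq (by ring)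
    calc T f n ^ 2 ≤ (∑ k ∈ F, |f k| * a n k) ^ 2 := by
          rw [apply_eq_sum_mul_apply_single T hf n, ← sq_abs]
          gcongr
          exact (abs_sum_le_sum_abs _ _).trans_eq (Finset.sum_congr rfl fun k _ => abs_mul _ _)
      _ ≤ ∑ k ∈ F, a n k * f k ^ 2 :=
          hcs.trans (mul_le_of_le_one_left (by positivity) (hT.sum_abs_row_le_one F n))
  calc ∑ n ∈ W, T f n ^ 2 ≤ ∑ n ∈ W, ∑ k ∈ F, a n k * f k ^ 2 := Finset.sum_le_sum fun n _ => hrow n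
    _ = ∑ k ∈ F, (∑ n ∈ W, a n k) * f k ^ 2 := by rw [Finset.sum_comm]; simp [Finset.sum_mul]
    _ ≤ ∑ k ∈ F, f k ^ 2 := Finset.sum_le_sum fun k _ =>
          mul_le_of_le_one_left (sq_nonneg _) (hT.sum_abs_column_le_one k W)

lemma tendsto_zero_of_summable_sq (hf : Summable fun k => f k ^ 2) : Tendsto f atTop (𝓝 0) := by
  rw [tendsto_zero_iff_abs_tendsto_zero]
  simpa [Real.sqrt_sq_eq_abs, Function.comp_def] using hf.tendsto_atTop_zero.sqrt

lemma IsDS.sum_sq_apply_le (hT : IsDS T) (hf : Summable fun k => f k ^ 2) (W : Finset ℕ) :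
    ∑ n ∈ W, T f n ^ 2 ≤ ∑' k, f k ^ 2 := by
  have hY :=
    hT.tendstoUniformly_map (tendstoUniformly_indicator_Iio (tendsto_zero_of_summable_sq hf))
  refine le_of_tendsto (tendsto_finsetSum W fun n _ => (hY.tendsto_at n).pow 2)
    (Eventually.of_forall fun M => ?_)
  calc ∑ n ∈ W, T ((Set.Iio M).indicator f) n ^ 2
      ≤ ∑ k ∈ range M, (Set.Iio M).indicator f k ^ 2 :=
        hT.sum_sq_apply_le_of_support (fun k hk => by simp_all) W
    _ = ∑ k ∈ range M, f k ^ 2 := Finset.sum_congr rfl fun k hk => by simp_all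
    _ ≤ ∑' k, f k ^ 2 := hf.sum_le_tsum _ fun _ _ => sq_nonneg _

lemma norm_rpow_two_toReal (a : ℝ) : ‖a‖ ^ (2 : ENNReal).toReal = a ^ 2 := by
  simp [Real.norm_eq_abs]

lemma lp.summable_sq (f : lp (fun _ : ℕ => ℝ) 2) : Summable fun k => f k ^ 2 := by
  simpa only [norm_rpow_two_toReal] using (lp.memℓp f).summable (by norm_num)

lemma lp.tsum_sq (f : lp (fun _ : ℕ => ℝ) 2) : ∑' k, f k ^ 2 = ‖f‖ ^ (2 : ENNReal).toReal := by
  simp only [← norm_rpow_two_toReal, lp.norm_rpow_eq_tsum (by norm_num : 0 < (2 : ENNReal).toReal)]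

lemma IsDS.memℓp_two (hT : IsDS T) (f : lp (fun _ : ℕ => ℝ) 2) : Memℓp (T f) 2 :=
  memℓp_gen' fun W => by
    simpa only [norm_rpow_two_toReal] using hT.sum_sq_apply_le (lp.summable_sq f) W

noncomputable def IsDS.toL2 (hT : IsDS T) : lp (fun _ : ℕ => ℝ) 2 →L[ℝ] lp (fun _ : ℕ => ℝ) 2 :=
  LinearMap.mkContinuous
    { toFun := fun f => ⟨T f, hT.memℓp_two f⟩
      map_add' := fun f g => Subtype.ext (map_add T (f : ℕ → ℝ) g)
      map_smul' := fun c f => Subtype.ext (map_smul T c (f : ℕ → ℝ)) }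
    1 fun f => (one_mul ‖f‖).symm ▸ lp.norm_le_of_forall_sum_le (by norm_num) (norm_nonneg f)
      fun W => by
        simpa only [LinearMap.coe_mk, AddHom.coe_mk, norm_rpow_two_toReal, lp.tsum_sq] using
          hT.sum_sq_apply_le (lp.summable_sq f) W

lemma IsDS.norm_toL2_le (hT : IsDS T) : ‖hT.toL2‖ ≤ 1 :=
  LinearMap.mkContinuous_norm_le _ zero_le_one _

lemma IsDS.coe_toL2_iterate (hT : IsDS T) (k : ℕ) (f : lp (fun _ : ℕ => ℝ) 2) :
    ⇑(hT.toL2^[k] f) = (⇑T)^[k] f := by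
  induction k with
  | zero => rfl
  | succ k ih => rw [Function.iterate_succ_apply', Function.iterate_succ_apply', ← ih]; rfl

lemma IsDS.coe_birkhoffAverage_toL2 (hT : IsDS T) (n : ℕ) (f : lp (fun _ : ℕ => ℝ) 2) :
    ⇑(birkhoffAverage ℝ hT.toL2 id n f) = cesaro T n f := by
  ext s
  rw [birkhoffAverage, birkhoffSum, lp.coeFn_smul, lp.coeFn_sum]
  simp only [Pi.smul_apply, Finset.sum_apply, id, hT.coe_toL2_iterate, smul_eq_mul, cesaro,
    div_eq_inv_mul]

/-- The von Neumann mean ergodic theorem in `ℓ²`, whose norm dominates the supremum norm. -/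
lemma IsDS.exists_tendstoUniformly_cesaro_of_memℓp (hT : IsDS T) (f : lp (fun _ : ℕ => ℝ) 2) :
    ∃ L, TendstoUniformly (fun n => cesaro T n f) L atTop := by
  obtain ⟨P, hmet⟩ : ∃ P, Tendsto (birkhoffAverage ℝ hT.toL2 id · f) atTop (𝓝 P) :=
    ⟨_, hT.toL2.tendsto_birkhoffAverage_orthogonalProjection hT.norm_toL2_le f⟩
  refine ⟨P, Metric.tendstoUniformly_iff.2 fun ε hε => ?_⟩
  filter_upwards [Metric.tendsto_nhds.1 hmet ε hε] with n hn s
  rw [← hT.coe_birkhoffAverage_toL2, dist_comm]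
  exact ((lp.lipschitzWith_one_eval 2 s).dist_le_mul _ _).trans_lt (by simpa using hn)

theorem IsDS.exists_tendstoUniformly_cesaro (hT : IsDS T) (hf : Tendsto f atTop (𝓝 0)) :
    ∃ L, TendstoUniformly (fun n => cesaro T n f) L atTop :=
  hT.exists_tendstoUniformly_cesaro_of_approx (tendstoUniformly_indicator_Iio hf) fun M =>
    hT.exists_tendstoUniformly_cesaro_of_memℓp ⟨(Set.Iio M).indicator f, memℓp_gen <|
      summable_of_ne_finset_zero (s := range M) fun k hk => by
        rw [Set.indicator_of_notMem (by simpa using hk)]; simp⟩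

end L2

section Shift

def shiftRight : (ℕ → ℝ) →ₗ[ℝ] (ℕ → ℝ) where
  toFun x n := if n = 0 then 0 else x (n - 1)
  map_add' x y := by ext n; by_cases h : n = 0 <;> simp [h]
  map_smul' c x := by ext n; by_cases h : n = 0 <;> simp [h]

lemma shiftRight_apply_zero (x : ℕ → ℝ) : shiftRight x 0 = 0 := rfl

lemma shiftRight_apply_succ (x : ℕ → ℝ) (n : ℕ) : shiftRight x (n + 1) = x n := rfl

lemma isDS_shiftRight : IsDS shiftRight := by
  refine ⟨fun x hx => ?_, fun x hx => ?_⟩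
  · have hsum : Summable fun n => |shiftRight x n| :=
      (summable_nat_add_iff 1).1 (by simpa only [shiftRight_apply_succ] using hx)
    refine ⟨hsum, le_of_eq ?_⟩
    simp [hsum.tsum_eq_zero_add, shiftRight_apply_zero, shiftRight_apply_succ]
  · have hbound (n : ℕ) : |shiftRight x n| ≤ supNorm x := by
      cases n with
      | zero => simpa [shiftRight_apply_zero] using supNorm_nonneg x
      | succ n => exact hx.abs_le_supNorm n
    exact ⟨⟨_, hbound⟩, supNorm_le hbound⟩

lemma shiftRight_iterate_one (k : ℕ) :
    (⇑shiftRight)^[k] (fun _ => 1) = fun s => if k ≤ s then 1 else 0 := by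
  induction k with
  | zero => simp
  | succ k ih =>
    ext s
    rw [Function.iterate_succ_apply', ih]
    cases s with
    | zero => simp [shiftRight_apply_zero]
    | succ s => simp [shiftRight_apply_succ]

lemma cesaro_shiftRight_one (n s : ℕ) :
    cesaro shiftRight n (fun _ => 1) s = (min n (s + 1) : ℕ) / n := by
  simp only [cesaro, shiftRight_iterate_one, Finset.sum_boole]
  congr
  rw [← Finset.card_range (min n (s + 1))]
  congr 2
  ext k
  simp only [Finset.mem_filter, Finset.mem_range]
  omega

lemma not_tendstoUniformly_cesaro_shiftRight_one (g : ℕ → ℝ) :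
    ¬ TendstoUniformly (fun n => cesaro shiftRight n (fun _ => 1)) g atTop := by
  intro h
  have hg (s : ℕ) : g s = 0 := by
    refine tendsto_nhds_unique (h.tendsto_at s) ?_
    refine (tendsto_const_div_atTop_nhds_zero_nat ((s + 1 : ℕ) : ℝ)).congr' ?_
    filter_upwards [eventually_ge_atTop (s + 1)] with n hn
    rw [cesaro_shiftRight_one, min_eq_right hn]
  obtain ⟨n, hn, hclose⟩ :=
    ((eventually_ge_atTop 1).and (Metric.tendstoUniformly_iff.1 h 1 one_pos)).exists
  have hone : cesaro shiftRight n (fun _ => 1) n = 1 := by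
    rw [cesaro_shiftRight_one, min_eq_left (Nat.le_succ n)]
    exact div_self (by positivity)
  simpa [hg, hone] using hclose n

end Shift

lemma exists_frequently_le_abs_of_not_tendsto_zero {x : ℕ → ℝ} (h : ¬ Tendsto x atTop (𝓝 0)) :
    ∃ ε > 0, ∃ᶠ k in atTop, ε ≤ |x k| := by
  obtain ⟨s, hs, hfreq⟩ := not_tendsto_iff_exists_frequently_notMem.1 h
  obtain ⟨ε, hε, hball⟩ := Metric.mem_nhds_iff.1 hs
  refine ⟨ε, hε, hfreq.mono fun k hk => not_lt.1 fun hlt => hk (hball ?_)⟩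
  rwa [Metric.mem_ball, dist_zero_right, Real.norm_eq_abs]

lemma FullySymmSeqSpace.one_mem_of_not_tendsto_zero (E : FullySymmSeqSpace) {x : ℕ → ℝ}
    (hx : x ∈ E.carrier) (h : ¬ Tendsto x atTop (𝓝 0)) : (fun _ => (1 : ℝ)) ∈ E.carrier := by
  obtain ⟨ε, hε, hfreq⟩ := exists_frequently_le_abs_of_not_tendsto_zero h
  have hy : ε⁻¹ • x ∈ E.carrier := E.carrier.smul_mem _ hx
  have hy_large : ∃ᶠ k in atTop, 1 ≤ |(ε⁻¹ • x) k| := hfreq.mono fun k hk => by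
    rwa [Pi.smul_apply, smul_eq_mul, abs_mul, abs_inv, abs_of_pos hε, one_le_inv_mul₀ hε]
  refine (E.fullySymm _ hy _ ⟨1, fun _ => by simp⟩ fun k => Finset.sum_le_sum fun n _ => ?_).1
  calc rearr (fun _ => 1) n ≤ supNorm fun _ => (1 : ℝ) := rearr_le_supNorm ⟨1, fun _ => by simp⟩ n
    _ = 1 := supNorm_const_one
    _ ≤ rearr (ε⁻¹ • x) n := le_rearr_of_frequently (E.bdd _ hy) hy_large n

/-- Criterion for the uniform individual ergodic theorem property of a fully symmetric
sequence space: (i) UIET ↔ (ii) `E ⊆ c₀` ↔ (iii) `𝟏 ∉ E`. -/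
theorem stmt14 (E : FullySymmSeqSpace) :
    ((∀ x ∈ E.carrier, ∀ T : (ℕ → ℝ) →ₗ[ℝ] (ℕ → ℝ), IsDS T →
        ∃ x' ∈ E.carrier,
          Tendsto (fun n => supNorm (fun s => cesaro T n x s - x' s)) atTop (nhds 0)) ↔
      (∀ x ∈ E.carrier, Tendsto x atTop (nhds 0))) ∧
    ((∀ x ∈ E.carrier, Tendsto x atTop (nhds 0)) ↔
      (fun _ => (1 : ℝ)) ∉ E.carrier) := by
  have c0_iff : (∀ x ∈ E.carrier, Tendsto x atTop (𝓝 0)) ↔ (fun _ => (1 : ℝ)) ∉ E.carrier :=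
    ⟨fun h hone => one_ne_zero (tendsto_nhds_unique tendsto_const_nhds (h _ hone)),
      fun h x hx => by_contra fun hx0 => h (E.one_mem_of_not_tendsto_zero hx hx0)⟩
  refine ⟨⟨fun huiet => c0_iff.2 fun hone => ?_, fun hc0 x hx T hT => ?_⟩, c0_iff⟩
  · obtain ⟨x', hx', hconv⟩ := huiet _ hone shiftRight isDS_shiftRight
    refine not_tendstoUniformly_cesaro_shiftRight_one x'
      (tendstoUniformly_of_tendsto_supNorm_sub (fun n => ?_) (E.bdd x' hx') hconv)
    exact isDS_shiftRight.isBdd_cesaro ⟨1, fun _ => by simp⟩ n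
  · have hbdd := hT.isBdd_cesaro (E.bdd x hx)
    obtain ⟨x', hx'⟩ := hT.exists_tendstoUniformly_cesaro (hc0 x hx)
    have hmaj (K : ℕ) : rearrSum K x' ≤ rearrSum K x :=
      rearrSum_le_of_tendstoUniformly hbdd hx' (hT.rearrSum_cesaro_le (E.bdd x hx) · K)
    exact ⟨x', (E.fullySymm x hx x' (hx'.isBdd hbdd) fun k => hmaj (k + 1)).1,
      hx'.tendsto_supNorm_sub⟩
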